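/- Let Υ : ℝ → ℝ be an even function and g : ℝ^d → ℝ^d. For h > 0 define the trigonometric integrator Φ̂_h(q,p) = (q⁺,p⁺) by q⁺ = cos(hΩ)q + h·sinc(hΩ)p + (1/2)h²·sinc(hΩ)Υ(hΩ)g(q), p⁺ = −hΩ²·sinc(hΩ)q + cos(hΩ)p + (1/2)h·(cos(hΩ)Υ(hΩ)g(q) + Υ(hΩ)g(q⁺)), and let Φ̂_{−h} be the same scheme with h replaced by −h. Then Φ̂_h is symmetric: for every (q,p) ∈ ℝ^d × ℝ^d, Φ̂_{−h}(Φ̂_h(q,p)) = (q,p). -/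

import Mathlib

noncomputable section

/-- The (unnormalized) sinc function: `sinc x = sin x / x` for `x ≠ 0`, `sinc 0 = 1`. -/
def rsinc (x : ℝ) : ℝ := if x = 0 then 1 else Real.sin x / x

/-- Real coordinate space `ℝ^d` with the Euclidean norm. -/
abbrev Vec (d : ℕ) : Type := EuclideanSpace ℝ (Fin d)

/-- Block-diagonal scalar operator: multiplies the first `d₁` coordinates by `a`
and the remaining `d₂` coordinates by `b`.  This realizes `f(hΩ)` for
`Ω = diag(0·I_{d₁}, ω·I_{d₂})`, with `a = f 0` and `b = f (hω)`. -/
def bop (d₁ d₂ : ℕ) (a b : ℝ) (v : Vec (d₁ + d₂)) : Vec (d₁ + d₂) :=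
  WithLp.toLp 2 (fun i => (if (i : ℕ) < d₁ then a else b) * v i)

/-- One-stage explicit ERKN integrator `Φ_h` for `q'' + Ω²q = g(q)`:
`Q = cos(c₁hΩ)q + c₁h·sinc(c₁hΩ)p`,
`q⁺ = cos(hΩ)q + h·sinc(hΩ)p + h²·b̄₁(hΩ)g(Q)`,
`p⁺ = −hΩ²·sinc(hΩ)q + cos(hΩ)p + h·b₁(hΩ)g(Q)`. -/
def erkn (d₁ d₂ : ℕ) (h ω c₁ : ℝ) (bbar b₁ : ℝ → ℝ)
    (g : Vec (d₁ + d₂) → Vec (d₁ + d₂)) (x : Vec (d₁ + d₂) × Vec (d₁ + d₂)) :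
    Vec (d₁ + d₂) × Vec (d₁ + d₂) :=
  let q := x.1
  let p := x.2
  let Q := bop d₁ d₂ (Real.cos (c₁ * (h * 0))) (Real.cos (c₁ * (h * ω))) q
         + bop d₁ d₂ (c₁ * h * rsinc (c₁ * (h * 0))) (c₁ * h * rsinc (c₁ * (h * ω))) p
  ( bop d₁ d₂ (Real.cos (h * 0)) (Real.cos (h * ω)) q
    + bop d₁ d₂ (h * rsinc (h * 0)) (h * rsinc (h * ω)) p
    + bop d₁ d₂ (h ^ 2 * bbar (h * 0)) (h ^ 2 * bbar (h * ω)) (g Q),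
    bop d₁ d₂ (-(h * 0 ^ 2 * rsinc (h * 0))) (-(h * ω ^ 2 * rsinc (h * ω))) q
    + bop d₁ d₂ (Real.cos (h * 0)) (Real.cos (h * ω)) p
    + bop d₁ d₂ (h * b₁ (h * 0)) (h * b₁ (h * ω)) (g Q) )

/-- The trigonometric integrator `Φ̂_h` with filter functions `Φ = 1`, `Ψ = sinc·Υ`,
`Ψ₀ = cos·Υ`, `Ψ₁ = Υ`. -/
def trig (d₁ d₂ : ℕ) (ω : ℝ) (Υ : ℝ → ℝ) (g : Vec (d₁ + d₂) → Vec (d₁ + d₂))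
    (h : ℝ) (x : Vec (d₁ + d₂) × Vec (d₁ + d₂)) :
    Vec (d₁ + d₂) × Vec (d₁ + d₂) :=
  let q := x.1
  let p := x.2
  let qplus := bop d₁ d₂ (Real.cos (h * 0)) (Real.cos (h * ω)) q
      + bop d₁ d₂ (h * rsinc (h * 0)) (h * rsinc (h * ω)) p
      + bop d₁ d₂ ((1/2) * h ^ 2 * rsinc (h * 0) * Υ (h * 0))
          ((1/2) * h ^ 2 * rsinc (h * ω) * Υ (h * ω)) (g q)
  ( qplus,
    bop d₁ d₂ (-(h * 0 ^ 2 * rsinc (h * 0))) (-(h * ω ^ 2 * rsinc (h * ω))) q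
    + bop d₁ d₂ (Real.cos (h * 0)) (Real.cos (h * ω)) p
    + bop d₁ d₂ ((1/2) * h * Real.cos (h * 0) * Υ (h * 0))
        ((1/2) * h * Real.cos (h * ω) * Υ (h * ω)) (g q)
    + bop d₁ d₂ ((1/2) * h * Υ (h * 0)) ((1/2) * h * Υ (h * ω)) (g qplus) )

/- Write `C = cos(hΩ)`, `S = h·sinc(hΩ)`, `W = hΩ²·sinc(hΩ)` and `U = (h/2)·Υ(hΩ)`.
These commute, satisfy `C² + SW = 1`, and the step is
`q⁺ = Cq + Sp + SU g(q)`, `p⁺ = -Wq + Cp + CU g(q) + U g(q⁺)`.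
Replacing `h` by `-h` keeps `C` and negates `S`, `W` and `U` (since `Υ` and `sinc` are even).
Substituting, the `g` terms cancel in pairs and `C² + SW = 1` leaves `(q, p)`. -/

section TrigStep

variable {R M : Type*} [CommRing R] [AddCommGroup M] [Module R M]

def trigStep (c s w u : R) (g : M → M) (x : M × M) : M × M :=
  let q' := c • x.1 + s • x.2 + (s * u) • g x.1
  (q', -(w • x.1) + c • x.2 + (c * u) • g x.1 + u • g q')

theorem trigStep_neg_comp_trigStep {c s w : R} (hcsw : c * c + s * w = 1) (u : R)
    (g : M → M) (x : M × M) :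
    trigStep c (-s) (-w) (-u) g (trigStep c s w u g x) = x := by
  obtain ⟨q, p⟩ := x
  have hq : (trigStep c (-s) (-w) (-u) g (trigStep c s w u g (q, p))).1 = q := by
    simp only [trigStep]
    linear_combination (norm := module) hcsw • q
  refine Prod.ext hq ?_
  simp only [trigStep] at hq ⊢
  rw [hq]
  linear_combination (norm := module) hcsw • (p + u • g q)

end TrigStep

theorem Real.mul_sinc (x : ℝ) : x * Real.sinc x = Real.sin x := by
  rcases eq_or_ne x 0 with rfl | hx
  · simp
  · rw [Real.sinc_of_ne_zero hx, mul_div_cancel₀ _ hx]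

theorem rsinc_eq_sinc : rsinc = Real.sinc := rfl

theorem bop_apply {d₁ d₂ : ℕ} (a b : ℝ) (v : Vec (d₁ + d₂)) (i : Fin (d₁ + d₂)) :
    bop d₁ d₂ a b v i = (if (i : ℕ) < d₁ then a else b) * v i := rfl

def blockDiag (d₁ d₂ : ℕ) : ℝ × ℝ →+* Module.End ℝ (Vec (d₁ + d₂)) where
  toFun c :=
    { toFun := bop d₁ d₂ c.1 c.2
      map_add' v w := by ext i; simp only [bop_apply, PiLp.add_apply]; ring
      map_smul' r v := by
        ext i; simp only [bop_apply, PiLp.smul_apply, smul_eq_mul, RingHom.id_apply]; ring }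
  map_one' := by ext v i; simp [bop_apply]
  map_mul' c c' := by
    ext v i
    simp only [bop_apply, Module.End.mul_apply, LinearMap.coe_mk, AddHom.coe_mk, Prod.fst_mul,
      Prod.snd_mul]
    split_ifs <;> ring
  map_zero' := by ext v i; simp [bop_apply]
  map_add' c c' := by
    ext v i
    simp only [bop_apply, LinearMap.add_apply, LinearMap.coe_mk, AddHom.coe_mk, Prod.fst_add,
      Prod.snd_add, PiLp.add_apply]
    split_ifs <;> ring

abbrev blockModule {d₁ d₂ : ℕ} : Module (ℝ × ℝ) (Vec (d₁ + d₂)) :=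
  Module.compHom _ (blockDiag d₁ d₂)

attribute [local instance] blockModule

theorem smul_eq_bop {d₁ d₂ : ℕ} (c : ℝ × ℝ) (v : Vec (d₁ + d₂)) :
    c • v = bop d₁ d₂ c.1 c.2 v := rfl

-- `f(hΩ)` for `Ω = (0, ω)`, acting on `Vec (d₁ + d₂)` through `blockModule`.
def blockFun (ω : ℝ) (f : ℝ → ℝ) (h : ℝ) : ℝ × ℝ := (f (h * 0), f (h * ω))

theorem blockFun_neg {f : ℝ → ℝ} (hf : ∀ x, f (-x) = f x) (ω h : ℝ) :
    blockFun ω f (-h) = blockFun ω f h := by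
  simp only [blockFun, neg_mul, hf]

theorem blockFun_cos_mul_self_add (ω h : ℝ) :
    blockFun ω Real.cos h * blockFun ω Real.cos h
      + (h • blockFun ω Real.sinc h) * (h • ((0, ω) ^ 2 * blockFun ω Real.sinc h)) = 1 := by
  have key (ν : ℝ) :
      Real.cos (h * ν) * Real.cos (h * ν) + h * Real.sinc (h * ν) * (h * (ν ^ 2 * Real.sinc (h * ν)))
        = 1 := by
    linear_combination (h * ν * Real.sinc (h * ν) + Real.sin (h * ν)) * Real.mul_sinc (h * ν)
      + Real.sin_sq_add_cos_sq (h * ν)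
  exact Prod.ext (key 0) (key ω)

theorem trig_eq_trigStep {d₁ d₂ : ℕ} (ω : ℝ) (Υ : ℝ → ℝ) (g : Vec (d₁ + d₂) → Vec (d₁ + d₂))
    (h : ℝ) :
    trig d₁ d₂ ω Υ g h =
      trigStep (blockFun ω Real.cos h) (h • blockFun ω Real.sinc h)
        (h • ((0, ω) ^ 2 * blockFun ω Real.sinc h)) ((h / 2) • blockFun ω Υ h) g := by
  funext x
  -- unlike `ring`, `ring_nf` also normalizes the coefficients inside the arguments of `g`
  refine Prod.ext ?_ ?_ <;> ext i <;>
    simp only [trig, trigStep, blockFun, rsinc_eq_sinc, smul_eq_bop, bop_apply, PiLp.add_apply,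
      PiLp.neg_apply, Prod.fst_mul, Prod.snd_mul, Prod.smul_fst, Prod.smul_snd, Prod.pow_fst,
      Prod.pow_snd, smul_eq_mul] <;>
    split_ifs <;> ring_nf

theorem trig_symmetric_general (d₁ d₂ : ℕ) (ω : ℝ) (Υ : ℝ → ℝ)
    (hΥeven : ∀ ν : ℝ, Υ (-ν) = Υ ν)
    (g : Vec (d₁ + d₂) → Vec (d₁ + d₂)) (h : ℝ)
    (q p : Vec (d₁ + d₂)) :
    trig d₁ d₂ ω Υ g (-h) (trig d₁ d₂ ω Υ g h (q, p)) = (q, p) := by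
  rw [trig_eq_trigStep, trig_eq_trigStep, blockFun_neg Real.cos_neg, blockFun_neg Real.sinc_neg,
    blockFun_neg hΥeven, neg_smul, neg_smul, neg_div, neg_smul]
  exact trigStep_neg_comp_trigStep (blockFun_cos_mul_self_add ω h) _ g (q, p)

/-- For even `Υ`, the trigonometric integrator is symmetric:
`Φ̂_{−h} ∘ Φ̂_h = id`. -/
theorem trig_symmetric (d₁ d₂ : ℕ) (ω : ℝ) (hω : 0 < ω) (Υ : ℝ → ℝ)
    (hΥeven : ∀ ν : ℝ, Υ (-ν) = Υ ν)
    (g : Vec (d₁ + d₂) → Vec (d₁ + d₂)) (h : ℝ) (hh : 0 < h)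
    (q p : Vec (d₁ + d₂)) :
    trig d₁ d₂ ω Υ g (-h) (trig d₁ d₂ ω Υ g h (q, p)) = (q, p) :=
  trig_symmetric_general d₁ d₂ ω Υ hΥeven g h q p
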